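/- Let m ≥ 1, r > 0, t₀ ∈ ℝ, I = [t₀ - r, t₀ + r], and let f : I → ℝ be of class C^{m+1} such that for each j = 2, …, m+1 either f^{(j)} ≥ 0 on I or f^{(j)} ≤ 0 on I. Suppose ω is a modulus of continuity with |f(x) - f(y)| ≤ ω(|x - y|) for all x, y ∈ I. Then |f^{(m)}(t₀)| ≤ 2^{(m+1)m/2 + m - 2} · ω(r) / r^m. -/

import Mathlib

/-!
Induction on `m`, trading one derivative for a halving of the interval. By the mean value
theorem, `f'` takes values in `[-ω h / h, ω h / h]` somewhere in `[z - h, z]` and somewhere in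
`[z, z + h]`; since `f''` has constant sign, `f'` is monotone, so `|f' z| ≤ ω h / h`. With
`h = r` this is the case `m = 1`. With `h = r / 2` it shows that on the half interval the
oscillation of `f'` is at most `4 ω r / r`, a constant modulus of continuity for `f'`, and the
inductive hypothesis for `f'` on the half interval costs the factor `2 ^ (m + 2)`.
-/

open Set

def HasConstSignOn (g : ℝ → ℝ) (s : Set ℝ) : Prop :=
  (∀ x ∈ s, 0 ≤ g x) ∨ (∀ x ∈ s, g x ≤ 0)

theorem iteratedDerivWithin_derivWithin_of_subset {𝕜 F : Type*}
    [NontriviallyNormedField 𝕜] [NormedAddCommGroup F] [NormedSpace 𝕜 F] {f : 𝕜 → F}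
    {s t : Set 𝕜} (hts : t ⊆ s) (hs : UniqueDiffOn 𝕜 s) (ht : UniqueDiffOn 𝕜 t) {n : ℕ}
    (hf : ContDiffOn 𝕜 (n + 1) f s) {x : 𝕜} (hx : x ∈ t) :
    iteratedDerivWithin n (derivWithin f s) t x = iteratedDerivWithin (n + 1) f s x := by
  rw [iteratedDerivWithin_succ', iteratedDerivWithin, iteratedDerivWithin,
    iteratedFDerivWithin_subset hts ht hs (hf.derivWithin hs le_rfl) hx]

section Convex

variable {f : ℝ → ℝ} {D : Set ℝ}

theorem Convex.exists_derivWithin_eq_slope (hD : Convex ℝ D) (hf : DifferentiableOn ℝ f D)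
    {x y : ℝ} (hx : x ∈ D) (hy : y ∈ D) (hxy : x < y) :
    ∃ ξ ∈ Ioo x y, derivWithin f D ξ = (f y - f x) / (y - x) := by
  have hsub : Icc x y ⊆ D := hD.ordConnected.out hx hy
  have hint : Ioo x y ⊆ interior D := interior_Icc (a := x) (b := y) ▸ interior_mono hsub
  refine exists_hasDerivAt_eq_slope f (derivWithin f D) hxy (hf.continuousOn.mono hsub)
    fun z hz => ?_
  exact (hf z (interior_subset (hint hz))).hasDerivWithinAt.hasDerivAt
    (mem_interior_iff_mem_nhds.1 (hint hz))

theorem Convex.monotoneOn_or_antitoneOn (hD : Convex ℝ D) (hf : DifferentiableOn ℝ f D)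
    (hsign : HasConstSignOn (derivWithin f D) D) : MonotoneOn f D ∨ AntitoneOn f D := by
  have hderiv : ∀ x ∈ interior D, HasDerivWithinAt f (derivWithin f D x) (interior D) x :=
    fun x hx => (hf x (interior_subset hx)).hasDerivWithinAt.mono interior_subset
  exact hsign.imp
    (fun h => monotoneOn_of_hasDerivWithinAt_nonneg hD hf.continuousOn hderiv
      fun x hx => h x (interior_subset hx))
    (fun h => antitoneOn_of_hasDerivWithinAt_nonpos hD hf.continuousOn hderiv
      fun x hx => h x (interior_subset hx))

theorem Convex.monotoneOn_or_antitoneOn_derivWithin (hD : Convex ℝ D) (hDu : UniqueDiffOn ℝ D)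
    (hf : ContDiffOn ℝ 2 f D) (hsign : HasConstSignOn (iteratedDerivWithin 2 f D) D) :
    MonotoneOn (derivWithin f D) D ∨ AntitoneOn (derivWithin f D) D := by
  rw [iteratedDerivWithin_succ', iteratedDerivWithin_one] at hsign
  exact hD.monotoneOn_or_antitoneOn ((hf.derivWithin hDu le_rfl).differentiableOn one_ne_zero)
    hsign

theorem Convex.abs_derivWithin_le_of_monotoneOn_or_antitoneOn (hD : Convex ℝ D)
    (hf : DifferentiableOn ℝ f D)
    (hmon : MonotoneOn (derivWithin f D) D ∨ AntitoneOn (derivWithin f D) D)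
    {z h A : ℝ} (hh : 0 < h) (hl : z - h ∈ D) (hr : z + h ∈ D)
    (hA₁ : |f z - f (z - h)| ≤ A) (hA₂ : |f (z + h) - f z| ≤ A) :
    |derivWithin f D z| ≤ A / h := by
  have hz : z ∈ D := hD.ordConnected.out hl hr ⟨by linarith, by linarith⟩
  obtain ⟨ξ, hξ, hξeq⟩ := hD.exists_derivWithin_eq_slope hf hl hz (by linarith)
  obtain ⟨η, hη, hηeq⟩ := hD.exists_derivWithin_eq_slope hf hz hr (by linarith)
  rw [sub_sub_cancel] at hξeq
  rw [add_sub_cancel_left] at hηeq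
  have hξA : |derivWithin f D ξ| ≤ A / h := by
    rw [hξeq, abs_div, abs_of_pos hh]; gcongr
  have hηA : |derivWithin f D η| ≤ A / h := by
    rw [hηeq, abs_div, abs_of_pos hh]; gcongr
  have hξD : ξ ∈ D := hD.ordConnected.out hl hz (Ioo_subset_Icc_self hξ)
  have hηD : η ∈ D := hD.ordConnected.out hz hr (Ioo_subset_Icc_self hη)
  rw [abs_le] at hξA hηA ⊢
  rcases hmon with hmon | hmon
  · have := hmon hξD hz hξ.2.le
    have := hmon hz hηD hη.1.le
    constructor <;> linarith
  · have := hmon hξD hz hξ.2.le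
    have := hmon hz hηD hη.1.le
    constructor <;> linarith

theorem Convex.abs_derivWithin_le_of_modulus (hD : Convex ℝ D) (hf : DifferentiableOn ℝ f D)
    (hmon : MonotoneOn (derivWithin f D) D ∨ AntitoneOn (derivWithin f D) D) {ω : ℝ → ℝ}
    (hmod : ∀ x ∈ D, ∀ y ∈ D, x ≠ y → |f x - f y| ≤ ω |x - y|)
    {z h : ℝ} (hh : 0 < h) (hl : z - h ∈ D) (hr : z + h ∈ D) :
    |derivWithin f D z| ≤ ω h / h := by
  have hz : z ∈ D := hD.ordConnected.out hl hr ⟨by linarith, by linarith⟩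
  refine hD.abs_derivWithin_le_of_monotoneOn_or_antitoneOn hf hmon hh hl hr ?_ ?_
  · simpa [abs_of_pos hh] using hmod z hz (z - h) hl (by linarith)
  · simpa [abs_of_pos hh] using hmod (z + h) hr z hz (by linarith)

end Convex

section Gromov

variable {ω f : ℝ → ℝ} {t₀ r : ℝ}

theorem abs_derivWithin_sub_le_of_modulus (hmono : MonotoneOn ω (Ioi 0)) (hr : 0 < r)
    (hf : ContDiffOn ℝ 2 f (Icc (t₀ - r) (t₀ + r)))
    (hsign : HasConstSignOn (iteratedDerivWithin 2 f (Icc (t₀ - r) (t₀ + r)))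
      (Icc (t₀ - r) (t₀ + r)))
    (hmod : ∀ x ∈ Icc (t₀ - r) (t₀ + r), ∀ y ∈ Icc (t₀ - r) (t₀ + r), x ≠ y →
      |f x - f y| ≤ ω |x - y|)
    {x y : ℝ} (hx : x ∈ Icc (t₀ - r / 2) (t₀ + r / 2))
    (hy : y ∈ Icc (t₀ - r / 2) (t₀ + r / 2)) :
    |derivWithin f (Icc (t₀ - r) (t₀ + r)) x - derivWithin f (Icc (t₀ - r) (t₀ + r)) y| ≤
      4 * ω r / r := by
  have hmon := (convex_Icc _ _).monotoneOn_or_antitoneOn_derivWithin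
    (uniqueDiffOn_Icc (by linarith)) hf hsign
  have hbound : ∀ z ∈ Icc (t₀ - r / 2) (t₀ + r / 2),
      |derivWithin f (Icc (t₀ - r) (t₀ + r)) z| ≤ 2 * ω r / r := fun z hz => calc
    _ ≤ ω (r / 2) / (r / 2) :=
      (convex_Icc _ _).abs_derivWithin_le_of_modulus (hf.differentiableOn two_ne_zero) hmon hmod
        (half_pos hr) ⟨by linarith [hz.1], by linarith [hz.2]⟩
        ⟨by linarith [hz.1], by linarith [hz.2]⟩
    _ ≤ ω r / (r / 2) := by
      gcongr; exact hmono (half_pos hr) hr (half_le_self hr.le)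
    _ = 2 * ω r / r := by field_simp
  calc _ ≤ _ := abs_sub _ _
    _ ≤ 2 * ω r / r + 2 * ω r / r := add_le_add (hbound x hx) (hbound y hy)
    _ = 4 * ω r / r := by ring

theorem gromov_exponent_succ {m : ℕ} (hm : 1 ≤ m) :
    (m + 1 + 1) * (m + 1) / 2 + (m + 1) - 2 = (m + 1) * m / 2 + m - 2 + (m + 2) := by
  have hsucc : (m + 1 + 1) * (m + 1) = (m + 1) * m + 2 * (m + 1) := by ring
  have hpos : 2 ≤ (m + 1) * m := by nlinarith
  rw [hsucc]
  omega

theorem abs_iteratedDerivWithin_le_of_modulus {m : ℕ} (hm : 1 ≤ m)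
    (hmono : MonotoneOn ω (Ioi 0)) (hr : 0 < r)
    (hf : ContDiffOn ℝ (m + 1) f (Icc (t₀ - r) (t₀ + r)))
    (hsign : ∀ j : ℕ, 2 ≤ j → j ≤ m + 1 →
      HasConstSignOn (iteratedDerivWithin j f (Icc (t₀ - r) (t₀ + r)))
        (Icc (t₀ - r) (t₀ + r)))
    (hmod : ∀ x ∈ Icc (t₀ - r) (t₀ + r), ∀ y ∈ Icc (t₀ - r) (t₀ + r), x ≠ y →
      |f x - f y| ≤ ω |x - y|) :
    |iteratedDerivWithin m f (Icc (t₀ - r) (t₀ + r)) t₀| ≤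
      2 ^ ((m + 1) * m / 2 + m - 2) * ω r / r ^ m := by
  induction m, hm using Nat.le_induction generalizing ω r f with
  | base =>
    have hmon := (convex_Icc _ _).monotoneOn_or_antitoneOn_derivWithin
      (uniqueDiffOn_Icc (by linarith)) hf (hsign 2 le_rfl le_rfl)
    simpa using (convex_Icc _ _).abs_derivWithin_le_of_modulus
      (hf.differentiableOn two_ne_zero) hmon hmod hr ⟨le_rfl, by linarith⟩
      ⟨by linarith, le_rfl⟩
  | succ m hm ih =>
    set I := Icc (t₀ - r) (t₀ + r)
    set J := Icc (t₀ - r / 2) (t₀ + r / 2)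
    have hIu : UniqueDiffOn ℝ I := uniqueDiffOn_Icc (by linarith)
    have hJu : UniqueDiffOn ℝ J := uniqueDiffOn_Icc (by linarith)
    have hJI : J ⊆ I := Icc_subset_Icc (by linarith) (by linarith)
    have hderiv : ∀ j ≤ m + 1, ∀ x ∈ J,
        iteratedDerivWithin j (derivWithin f I) J x = iteratedDerivWithin (j + 1) f I x :=
      fun j hj x hx =>
        iteratedDerivWithin_derivWithin_of_subset hJI hIu hJu (hf.of_le (by norm_cast; omega)) hx
    have hg : ContDiffOn ℝ (m + 1) (derivWithin f I) J :=
      (hf.derivWithin hIu (by norm_cast)).mono hJI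
    have hsign' : ∀ j : ℕ, 2 ≤ j → j ≤ m + 1 →
        HasConstSignOn (iteratedDerivWithin j (derivWithin f I) J) J := fun j h2j hj =>
      (hsign (j + 1) (by omega) (by omega)).imp
        (fun h x hx => hderiv j hj x hx ▸ h x (hJI hx))
        (fun h x hx => hderiv j hj x hx ▸ h x (hJI hx))
    have hmod' : ∀ x ∈ J, ∀ y ∈ J, x ≠ y →
        |derivWithin f I x - derivWithin f I y| ≤ (fun _ => 4 * ω r / r) |x - y| :=
      fun x hx y hy _ => abs_derivWithin_sub_le_of_modulus hmono hr
        (hf.of_le (by norm_cast; omega)) (hsign 2 le_rfl (by omega)) hmod hx hy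
    rw [← hderiv m (by omega) t₀ ⟨by linarith, by linarith⟩, gromov_exponent_succ hm]
    calc _ ≤ 2 ^ ((m + 1) * m / 2 + m - 2) * (4 * ω r / r) / (r / 2) ^ m :=
          ih monotoneOn_const (half_pos hr) hg hsign' hmod'
      _ = _ := by rw [pow_add, div_pow]; field_simp; ring

end Gromov

theorem gromov_inequality_modulus_general (ω : ℝ → ℝ)
    (hmono : MonotoneOn ω (Set.Ioi 0))
    (m : ℕ) (hm : 1 ≤ m)
    (t₀ r : ℝ) (hr : 0 < r) (I : Set ℝ) (hI : I = Set.Icc (t₀ - r) (t₀ + r))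
    (f : ℝ → ℝ) (hf : ContDiffOn ℝ (m + 1) f I)
    (hsign : ∀ j : ℕ, 2 ≤ j → j ≤ m + 1 →
      (∀ x ∈ I, 0 ≤ iteratedDerivWithin j f I x) ∨
      (∀ x ∈ I, iteratedDerivWithin j f I x ≤ 0))
    (hmod : ∀ x ∈ I, ∀ y ∈ I, x ≠ y → |f x - f y| ≤ ω |x - y|) :
    |iteratedDerivWithin m f I t₀| ≤ 2 ^ ((m + 1) * m / 2 + m - 2) * ω r / r ^ m := by
  subst hI
  exact abs_iteratedDerivWithin_le_of_modulus hm hmono hr hf hsign hmod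

/-- Gromov's inequality with a modulus of continuity: if `f` is `C^{m+1}` on
`I = [t₀ - r, t₀ + r]`, each `f^{(j)}`, `2 ≤ j ≤ m+1`, has constant sign on `I`, and
`|f x - f y| ≤ ω |x - y|` on `I`, then `|f^{(m)} t₀| ≤ 2^{(m+1)m/2 + m - 2} * ω r / r^m`. -/
theorem gromov_inequality_modulus (ω : ℝ → ℝ)
    (hpos : ∀ t ∈ Set.Ioi (0 : ℝ), 0 < ω t)
    (hcont : ContinuousOn ω (Set.Ioi 0))
    (hmono : MonotoneOn ω (Set.Ioi 0))
    (hconc : ConcaveOn ℝ (Set.Ioi 0) ω)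
    (hlim : Filter.Tendsto ω (nhdsWithin 0 (Set.Ioi 0)) (nhds 0))
    (m : ℕ) (hm : 1 ≤ m)
    (t₀ r : ℝ) (hr : 0 < r) (I : Set ℝ) (hI : I = Set.Icc (t₀ - r) (t₀ + r))
    (f : ℝ → ℝ) (hf : ContDiffOn ℝ (m + 1) f I)
    (hsign : ∀ j : ℕ, 2 ≤ j → j ≤ m + 1 →
      (∀ x ∈ I, 0 ≤ iteratedDerivWithin j f I x) ∨
      (∀ x ∈ I, iteratedDerivWithin j f I x ≤ 0))
    (hmod : ∀ x ∈ I, ∀ y ∈ I, x ≠ y → |f x - f y| ≤ ω |x - y|) :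
    |iteratedDerivWithin m f I t₀| ≤ 2 ^ ((m + 1) * m / 2 + m - 2) * ω r / r ^ m :=
  gromov_inequality_modulus_general ω hmono m hm t₀ r hr I hI f hf hsign hmod
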